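/- Suppose S ⊆ [0,s] ∩ ℤ with 0 ∈ S. Then there is an optimal periodic covering of ℤ by translates of S whose period is at most 2^s. -/

import Mathlib

/-!
At position `x`, a finite cover `T` of an interval is in the state recording which of
`x + 1, …, x + s` are already covered by translates `t + S` with `t ∈ T`, `t ≤ x`: a vertex of
`G_S`, so one of `2 ^ s`. An optimal cover of `{1, …, n}` with `n > 2 ^ s` therefore repeats a
state at some `x < x + ℓ ≤ 2 ^ s`. Repeating the block `T ∩ (x, x + ℓ]` with period `ℓ` covers
`ℤ` (follow the chain of covering translates around the cycle), and cutting the block out of `T`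
leaves a cover of `{1, …, n - ℓ}`. If `μ` is the least density of a periodic covering of period
at most `2 ^ s`, induction on `n` gives `τ(S, n) ≥ μ (n - 2 ^ s)`, hence `τ(S) ≥ μ`; conversely
every periodic covering bounds `τ(S)` from above by its density.
-/

open Pointwise

/-- `τ(S,n)`: the minimal number of integer translates of `S` covering `{1,...,n}`. -/
noncomputable def tauZ (S : Finset ℤ) (n : ℕ) : ℕ :=
  sInf {m | ∃ T : Finset ℤ, T.card = m ∧ Finset.Icc (1 : ℤ) n ⊆ T + S}

/-- The covering density `τ(S)` of a finite set `S ⊂ ℤ`, as the infimum of `τ(S,n)/n`. -/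
noncomputable def covDens (S : Finset ℤ) : ℝ :=
  ⨅ n : ℕ+, (tauZ S n : ℝ) / n

theorem Finset.mem_add_iff_exists_sub_mem {G : Type*} [AddCommGroup G] [DecidableEq G]
    {S T : Finset G} {p : G} :
    p ∈ T + S ↔ ∃ t ∈ T, p - t ∈ S := by
  simp [Finset.mem_add, ← eq_sub_iff_add_eq']

theorem Set.mem_add_iff_exists_sub_mem {G : Type*} [AddCommGroup G] {S T : Set G} {p : G} :
    p ∈ T + S ↔ ∃ t ∈ T, p - t ∈ S := by
  simp [Set.mem_add, ← eq_sub_iff_add_eq']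

section tauZ

variable {S : Finset ℤ}

theorem tauZ_le_card {n : ℕ} {T : Finset ℤ} (h : Finset.Icc (1 : ℤ) n ⊆ T + S) :
    tauZ S n ≤ T.card :=
  Nat.sInf_le ⟨T, rfl, h⟩

theorem exists_card_eq_tauZ (h0 : (0 : ℤ) ∈ S) (n : ℕ) :
    ∃ T : Finset ℤ, T.card = tauZ S n ∧ Finset.Icc (1 : ℤ) n ⊆ T + S :=
  Nat.sInf_mem (s := {m | ∃ T : Finset ℤ, T.card = m ∧ Finset.Icc (1 : ℤ) n ⊆ T + S})
    ⟨_, Finset.Icc 1 n, rfl, fun p hp => Finset.mem_add_iff_exists_sub_mem.mpr ⟨p, hp, by simpa⟩⟩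

theorem tauZ_add_le (h0 : (0 : ℤ) ∈ S) (a b : ℕ) : tauZ S (a + b) ≤ tauZ S a + tauZ S b := by
  obtain ⟨T₁, hT₁, hcov₁⟩ := exists_card_eq_tauZ h0 a
  obtain ⟨T₂, hT₂, hcov₂⟩ := exists_card_eq_tauZ h0 b
  have hcov : Finset.Icc (1 : ℤ) (a + b : ℕ) ⊆ (T₁ ∪ T₂.image (· + (a : ℤ))) + S := by
    intro p hp
    simp only [Finset.mem_Icc, Nat.cast_add] at hp
    rcases le_or_gt p a with hpa | hpa
    · obtain ⟨t, ht, hpt⟩ := Finset.mem_add_iff_exists_sub_mem.mp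
        (hcov₁ (Finset.mem_Icc.mpr ⟨hp.1, hpa⟩))
      exact Finset.mem_add_iff_exists_sub_mem.mpr ⟨t, Finset.mem_union_left _ ht, hpt⟩
    · obtain ⟨t, ht, hpt⟩ := Finset.mem_add_iff_exists_sub_mem.mp
        (hcov₂ (Finset.mem_Icc.mpr ⟨by omega, by omega⟩ : p - a ∈ _))
      refine Finset.mem_add_iff_exists_sub_mem.mpr
        ⟨t + a, Finset.mem_union_right _ (Finset.mem_image_of_mem _ ht), ?_⟩
      rwa [sub_add_eq_sub_sub_swap]
  calc tauZ S (a + b) ≤ (T₁ ∪ T₂.image (· + (a : ℤ))).card := tauZ_le_card hcov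
    _ ≤ T₁.card + T₂.card :=
      (Finset.card_union_le _ _).trans (Nat.add_le_add_left Finset.card_image_le _)
    _ = tauZ S a + tauZ S b := by rw [hT₁, hT₂]

theorem tauZ_mul_le (h0 : (0 : ℤ) ∈ S) (K n : ℕ) : tauZ S (K * n) ≤ K * tauZ S n := by
  induction K with
  | zero => simpa using tauZ_le_card (T := ∅) (by simp)
  | succ K ih =>
    rw [Nat.succ_mul, Nat.succ_mul]
    exact (tauZ_add_le h0 _ _).trans (by omega)

end tauZ

section Periodic

variable {T : Set ℤ} {ℓ : ℤ}

theorem mem_iff_add_mul_mem (hper : ∀ x, x ∈ T ↔ x + ℓ ∈ T) (j x : ℤ) :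
    x ∈ T ↔ x + j * ℓ ∈ T :=
  (Function.Periodic.int_mul (f := (· ∈ T)) (fun x => propext (hper x).symm) j x).symm.to_iff

theorem ncard_inter_Ico_add_mul (hper : ∀ x, x ∈ T ↔ x + ℓ ∈ T) (a b j : ℤ) :
    (T ∩ Set.Ico (a + j * ℓ) (b + j * ℓ)).ncard = (T ∩ Set.Ico a b).ncard := by
  have himage : (· + j * ℓ) '' (T ∩ Set.Ico a b) = T ∩ Set.Ico (a + j * ℓ) (b + j * ℓ) := by
    ext z
    constructor
    · rintro ⟨w, ⟨hw, hwa, hwb⟩, rfl⟩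
      exact ⟨(mem_iff_add_mul_mem hper j w).mp hw, by simpa using hwa, by simpa using hwb⟩
    · rintro ⟨hz, hza, hzb⟩
      refine ⟨z - j * ℓ, ⟨(mem_iff_add_mul_mem hper j _).mpr (by simpa using hz), ?_, ?_⟩, by simp⟩
      · simpa [le_sub_iff_add_le] using hza
      · simpa [sub_lt_iff_lt_add] using hzb
  rw [← himage, Set.ncard_image_of_injective _ (add_left_injective _)]

theorem ncard_inter_Ico_add_nat_mul (hper : ∀ x, x ∈ T ↔ x + ℓ ∈ T) (hℓ : 0 ≤ ℓ) (a : ℤ) (n : ℕ) :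
    (T ∩ Set.Ico a (a + n * ℓ)).ncard = n * (T ∩ Set.Ico a (a + ℓ)).ncard := by
  induction n with
  | zero => simp
  | succ n ih =>
    have hsplit : Set.Ico a (a + (n + 1 : ℕ) * ℓ) =
        Set.Ico a (a + n * ℓ) ∪ Set.Ico (a + n * ℓ) (a + ℓ + n * ℓ) := by
      push_cast
      rw [Set.Ico_union_Ico_eq_Ico (by nlinarith) (by linarith)]
      ring_nf
    rw [hsplit, Set.inter_union_distrib_left, Set.ncard_union_eq, ih,
      ncard_inter_Ico_add_mul hper, Nat.succ_mul]
    exact (Set.Ico_disjoint_Ico_same).mono Set.inter_subset_right Set.inter_subset_right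

end Periodic

def HasPeriodicCover (S : Finset ℤ) (ℓ k : ℕ) : Prop :=
  0 < ℓ ∧ ∃ T : Set ℤ, (∀ x, x ∈ T ↔ x + (ℓ : ℤ) ∈ T) ∧ T + (S : Set ℤ) = Set.univ ∧
    (T ∩ Set.Ico 0 (ℓ : ℤ)).ncard = k

theorem HasPeriodicCover.le {S : Finset ℤ} {ℓ k : ℕ} (h : HasPeriodicCover S ℓ k) : k ≤ ℓ := by
  obtain ⟨-, T, -, -, rfl⟩ := h
  calc (T ∩ Set.Ico 0 (ℓ : ℤ)).ncard ≤ (Set.Ico 0 (ℓ : ℤ)).ncard :=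
        Set.ncard_le_ncard Set.inter_subset_right (Set.finite_Ico _ _)
    _ = ℓ := by simp [← Finset.coe_Ico, Set.ncard_coe_finset]

theorem hasPeriodicCover_one_one {S : Finset ℤ} (h0 : (0 : ℤ) ∈ S) : HasPeriodicCover S 1 1 := by
  refine ⟨one_pos, Set.univ, by simp, ?_, ?_⟩
  · exact Set.eq_univ_of_forall fun p =>
      Set.mem_add_iff_exists_sub_mem.mpr ⟨p, trivial, by simpa⟩
  · simp [show Set.Ico (0 : ℤ) 1 = {0} by ext; simp; omega]

theorem exists_hasPeriodicCover_forall_div_le {S : Finset ℤ} (h0 : (0 : ℤ) ∈ S) (s : ℕ) :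
    ∃ ℓ k, ℓ ≤ 2 ^ s ∧ HasPeriodicCover S ℓ k ∧
      ∀ ℓ' k', ℓ' ≤ 2 ^ s → HasPeriodicCover S ℓ' k' → (k / ℓ : ℝ) * ℓ' ≤ k' := by
  classical
  set pairs := (Finset.range (2 ^ s + 1) ×ˢ Finset.range (2 ^ s + 1)).filter
    fun p => HasPeriodicCover S p.1 p.2
  have hmem {ℓ k : ℕ} : (ℓ, k) ∈ pairs ↔ ℓ ≤ 2 ^ s ∧ HasPeriodicCover S ℓ k := by
    simp only [pairs, Finset.mem_filter, Finset.mem_product, Finset.mem_range]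
    exact ⟨fun h => ⟨by omega, h.2⟩, fun h => ⟨⟨by omega, by have := h.2.le; omega⟩, h.2⟩⟩
  obtain ⟨⟨ℓ, k⟩, hpair, hmin⟩ := pairs.exists_min_image (fun p => (p.2 / p.1 : ℝ))
    ⟨(1, 1), hmem.mpr ⟨Nat.one_le_two_pow, hasPeriodicCover_one_one h0⟩⟩
  obtain ⟨hℓs, hcover⟩ := hmem.mp hpair
  refine ⟨ℓ, k, hℓs, hcover, fun ℓ' k' hℓ' hcover' => ?_⟩
  exact (le_div_iff₀ (by exact_mod_cast hcover'.1)).mp (hmin (ℓ', k') (hmem.mpr ⟨hℓ', hcover'⟩))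

section CoverState

variable {S : Finset ℤ} {s : ℕ}

open Classical in
/-- The vertex of `G_S` through which the finite cover `T` passes at position `x`. -/
noncomputable def coverState (S : Finset ℤ) (s : ℕ) (T : Finset ℤ) (x : ℤ) : Finset ℤ :=
  (Finset.Icc 1 (s : ℤ)).filter fun i => ∃ t ∈ T, t ≤ x ∧ x + i - t ∈ S

theorem mem_coverState {T : Finset ℤ} {x i : ℤ} :
    i ∈ coverState S s T x ↔ (1 ≤ i ∧ i ≤ s) ∧ ∃ t ∈ T, t ≤ x ∧ x + i - t ∈ S := by
  simp [coverState]

theorem exists_coverState_eq (T : Finset ℤ) :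
    ∃ x ℓ : ℕ, 0 < ℓ ∧ x + ℓ ≤ 2 ^ s ∧ coverState S s T x = coverState S s T (x + ℓ : ℕ) := by
  have hcard : ((Finset.Icc 1 (s : ℤ)).powerset).card < (Finset.range (2 ^ s + 1)).card := by
    simp
  obtain ⟨x, hx, y, hy, hne, hxy⟩ := Finset.exists_ne_map_eq_of_card_lt_of_maps_to hcard
    (f := fun x : ℕ => coverState S s T x)
    fun x _ => Finset.mem_powerset.mpr (Finset.filter_subset _ _)
  rw [Finset.mem_range] at hx hy
  rcases hne.lt_or_gt with h | h
  · exact ⟨x, y - x, by omega, by omega, by rwa [Nat.add_sub_cancel' h.le]⟩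
  · exact ⟨y, x - y, by omega, by omega, by rwa [Nat.add_sub_cancel' h.le, eq_comm]⟩

def cutOut (T : Finset ℤ) (x : ℤ) (ℓ : ℕ) : Finset ℤ :=
  T.filter (· ≤ x) ∪ (T.filter (x + ℓ < ·)).image (· - (ℓ : ℤ))

theorem Icc_sub_subset_cutOut_add (hS : S ⊆ Finset.Icc 0 (s : ℤ)) {T : Finset ℤ} {N x : ℤ} {ℓ : ℕ}
    (hcov : Finset.Icc 1 N ⊆ T + S) (hA : coverState S s T x = coverState S s T (x + ℓ)) :
    Finset.Icc 1 (N - ℓ) ⊆ cutOut T x ℓ + S := by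
  intro p hp
  rw [Finset.mem_Icc] at hp
  rw [Finset.mem_add_iff_exists_sub_mem, cutOut]
  rcases le_or_gt p x with hpx | hpx
  · obtain ⟨t, ht, hpt⟩ := Finset.mem_add_iff_exists_sub_mem.mp
      (hcov (Finset.mem_Icc.mpr ⟨hp.1, by omega⟩))
    have := Finset.mem_Icc.mp (hS hpt)
    exact ⟨t, Finset.mem_union_left _ (Finset.mem_filter.mpr ⟨ht, by omega⟩), hpt⟩
  · obtain ⟨t, ht, hpt⟩ := Finset.mem_add_iff_exists_sub_mem.mp
      (hcov (Finset.mem_Icc.mpr ⟨by omega, by omega⟩ : p + ℓ ∈ _))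
    have := Finset.mem_Icc.mp (hS hpt)
    rcases le_or_gt t (x + ℓ) with htx | htx
    · -- `p + ℓ` is covered from a position `≤ x + ℓ`, so the equal state at `x` covers `p`
      have hstate : p - x ∈ coverState S s T (x + ℓ) :=
        mem_coverState.mpr ⟨⟨by omega, by omega⟩, t, ht, htx,
          by rwa [show x + ℓ + (p - x) = p + ℓ by ring]⟩
      obtain ⟨-, t', ht', ht'x, hpt'⟩ := mem_coverState.mp (hA ▸ hstate)
      exact ⟨t', Finset.mem_union_left _ (Finset.mem_filter.mpr ⟨ht', ht'x⟩), by simpa using hpt'⟩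
    · refine ⟨t - ℓ, Finset.mem_union_right _ ?_, by rwa [sub_sub_eq_add_sub]⟩
      exact Finset.mem_image_of_mem _ (Finset.mem_filter.mpr ⟨ht, htx⟩)

theorem card_cutOut_add_card_le (T : Finset ℤ) (x : ℤ) (ℓ : ℕ) :
    (cutOut T x ℓ).card + (T ∩ Finset.Ioc x (x + ℓ)).card ≤ T.card := by
  have hdisj₁ : Disjoint (T.filter (· ≤ x)) (T.filter (x + ℓ < ·)) :=
    Finset.disjoint_filter.mpr fun _ _ h₁ h₂ => by omega
  have hdisj₂ : Disjoint (T.filter (· ≤ x) ∪ T.filter (x + ℓ < ·)) (T ∩ Finset.Ioc x (x + ℓ)) := by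
    simp only [Finset.disjoint_left, Finset.mem_union, Finset.mem_filter, Finset.mem_inter,
      Finset.mem_Ioc]
    omega
  calc (cutOut T x ℓ).card + (T ∩ Finset.Ioc x (x + ℓ)).card
        ≤ (T.filter (· ≤ x)).card + (T.filter (x + ℓ < ·)).card
          + (T ∩ Finset.Ioc x (x + ℓ)).card := by
        gcongr
        exact (Finset.card_union_le _ _).trans (Nat.add_le_add_left Finset.card_image_le _)
    _ = (T.filter (· ≤ x) ∪ T.filter (x + ℓ < ·) ∪ T ∩ Finset.Ioc x (x + ℓ)).card := by
        rw [Finset.card_union_of_disjoint hdisj₂, Finset.card_union_of_disjoint hdisj₁]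
    _ ≤ T.card := Finset.card_le_card <| Finset.union_subset
        (Finset.union_subset (Finset.filter_subset _ _) (Finset.filter_subset _ _))
        Finset.inter_subset_left

theorem tauZ_sub_add_card_le (hS : S ⊆ Finset.Icc 0 (s : ℤ)) {T : Finset ℤ} {n : ℕ} {x : ℤ}
    {ℓ : ℕ} (hℓn : ℓ ≤ n) (hcov : Finset.Icc 1 (n : ℤ) ⊆ T + S)
    (hA : coverState S s T x = coverState S s T (x + ℓ)) :
    tauZ S (n - ℓ) + (T ∩ Finset.Ioc x (x + ℓ)).card ≤ T.card := by
  have hcut := Icc_sub_subset_cutOut_add hS hcov hA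
  rw [← Nat.cast_sub hℓn] at hcut
  have := tauZ_le_card hcut
  have := card_cutOut_add_card_le T x ℓ
  omega

theorem exists_mem_Ioc_sub_add_mul_mem (hS : S ⊆ Finset.Icc 0 (s : ℤ)) {T : Finset ℤ} {x : ℤ}
    {ℓ : ℕ} (hℓ : 0 < ℓ) (hA : coverState S s T x = coverState S s T (x + ℓ)) {q t : ℤ}
    (ht : t ∈ T) (htx : t ≤ x + ℓ) (hqt : q - t ∈ S) (hxq : x < q) :
    ∃ w ∈ T ∩ Finset.Ioc x (x + ℓ), ∃ m : ℤ, q - (w + m * ℓ) ∈ S := by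
  induction hk : (x + s + 1 - q).toNat using Nat.strong_induction_on generalizing q t with
  | _ k ih =>
  have hqt' := Finset.mem_Icc.mp (hS hqt)
  by_cases hxt : x < t
  · exact ⟨t, Finset.mem_inter.mpr ⟨ht, Finset.mem_Ioc.mpr ⟨hxt, htx⟩⟩, 0, by simpa using hqt⟩
  · have hstate : q - x ∈ coverState S s T x :=
      mem_coverState.mpr ⟨⟨by omega, by omega⟩, t, ht, by omega, by rwa [add_sub_cancel]⟩
    obtain ⟨-, t', ht', ht'x, hqt'⟩ := mem_coverState.mp (hA ▸ hstate)
    obtain ⟨w, hw, m, hm⟩ := ih _ (by omega) ht' ht'x (q := q + ℓ)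
      (by rwa [show x + ℓ + (q - x) = q + ℓ by ring] at hqt') (by omega) rfl
    exact ⟨w, hw, m - 1, by rwa [show q - (w + (m - 1) * ℓ) = q + ℓ - (w + m * ℓ) by ring]⟩

theorem hasPeriodicCover_of_coverState_eq (hS : S ⊆ Finset.Icc 0 (s : ℤ)) {T : Finset ℤ} {x : ℤ}
    {ℓ : ℕ} (hℓ : 0 < ℓ) (hcov : Finset.Ioc x (x + ℓ) ⊆ T + S)
    (hA : coverState S s T x = coverState S s T (x + ℓ)) :
    HasPeriodicCover S ℓ (T ∩ Finset.Ioc x (x + ℓ)).card := by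
  set W := T ∩ Finset.Ioc x (x + ℓ)
  have hℓ' : (0 : ℤ) < ℓ := by exact_mod_cast hℓ
  have hW {w : ℤ} (hw : w ∈ W) : x < w ∧ w ≤ x + ℓ := Finset.mem_Ioc.mp (Finset.mem_inter.mp hw).2
  -- the `ℓ`-periodic extension of `W`, translated so that `x + 1` goes to `0`
  refine ⟨hℓ, {z | x + 1 + z % ℓ ∈ W}, fun z => by simp, ?_, ?_⟩
  · refine Set.eq_univ_of_forall fun p => Set.mem_add_iff_exists_sub_mem.mpr ?_
    have hp₀ := Int.emod_nonneg p hℓ'.ne'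
    have hpℓ := Int.emod_lt_of_pos p hℓ'
    obtain ⟨t, ht, hqt⟩ := Finset.mem_add_iff_exists_sub_mem.mp
      (hcov (Finset.mem_Ioc.mpr ⟨by omega, by omega⟩ : x + 1 + p % ℓ ∈ _))
    have := Finset.mem_Icc.mp (hS hqt)
    obtain ⟨w, hw, m, hm⟩ := exists_mem_Ioc_sub_add_mul_mem hS hℓ hA ht (by omega) hqt (by omega)
    have hxw := hW hw
    refine ⟨w - (x + 1) + (m + p / ℓ) * ℓ, ?_, ?_⟩
    · show x + 1 + (w - (x + 1) + (m + p / ℓ) * ℓ) % ℓ ∈ W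
      rwa [Int.add_mul_emod_self_right, Int.emod_eq_of_lt (by omega) (by omega), add_sub_cancel]
    · rw [Finset.mem_coe]
      convert hm using 1
      linear_combination -Int.emod_add_mul_ediv p ℓ
  · have hinter : {z | x + 1 + z % ℓ ∈ W} ∩ Set.Ico 0 (ℓ : ℤ) = (· - (x + 1)) '' W := by
      ext z
      simp only [Set.mem_inter_iff, Set.mem_ofPred_eq, Set.mem_Ico, Set.mem_image, Finset.mem_coe]
      constructor
      · rintro ⟨hz, h₀, hℓz⟩
        refine ⟨x + 1 + z, ?_, by ring⟩
        rwa [Int.emod_eq_of_lt h₀ hℓz] at hz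
      · rintro ⟨w, hw, rfl⟩
        have hxw := hW hw
        refine ⟨?_, by omega, by omega⟩
        rwa [Int.emod_eq_of_lt (by omega) (by omega), add_sub_cancel]
    rw [hinter, Set.ncard_image_of_injective _ sub_left_injective, Set.ncard_coe_finset]

theorem exists_hasPeriodicCover_tauZ_sub_add_le (hS : S ⊆ Finset.Icc 0 (s : ℤ))
    (h0 : (0 : ℤ) ∈ S) {n : ℕ} (hn : 2 ^ s < n) :
    ∃ ℓ k, ℓ ≤ 2 ^ s ∧ HasPeriodicCover S ℓ k ∧ tauZ S (n - ℓ) + k ≤ tauZ S n := by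
  obtain ⟨T, hT, hcov⟩ := exists_card_eq_tauZ h0 n
  obtain ⟨x, ℓ, hℓ, hxℓ, hA⟩ := exists_coverState_eq (S := S) (s := s) T
  push_cast at hA
  have hcycle : Finset.Ioc (x : ℤ) (x + ℓ) ⊆ T + S := fun q hq => hcov <| by
    rw [Finset.mem_Ioc] at hq
    rw [Finset.mem_Icc]
    omega
  exact ⟨ℓ, _, by omega, hasPeriodicCover_of_coverState_eq hS hℓ hcycle hA,
    hT ▸ tauZ_sub_add_card_le hS (by omega) hcov hA⟩

theorem mul_sub_le_tauZ (hS : S ⊆ Finset.Icc 0 (s : ℤ)) (h0 : (0 : ℤ) ∈ S) {μ : ℝ} (hμ : 0 ≤ μ)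
    (hmin : ∀ ℓ k, ℓ ≤ 2 ^ s → HasPeriodicCover S ℓ k → μ * ℓ ≤ k) (n : ℕ) :
    μ * (n - 2 ^ s) ≤ tauZ S n := by
  induction n using Nat.strong_induction_on with
  | _ n ih =>
  rcases le_or_gt n (2 ^ s) with hn | hn
  · have : (n : ℝ) ≤ 2 ^ s := by exact_mod_cast hn
    exact (mul_nonpos_of_nonneg_of_nonpos hμ (by linarith)).trans (Nat.cast_nonneg _)
  · obtain ⟨ℓ, k, hℓs, hcover, hτ⟩ := exists_hasPeriodicCover_tauZ_sub_add_le hS h0 hn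
    have hrec := ih (n - ℓ) (by have := hcover.1; omega)
    have hμℓ := hmin ℓ k hℓs hcover
    have hτ' : (tauZ S (n - ℓ) : ℝ) + k ≤ tauZ S n := by exact_mod_cast hτ
    rw [Nat.cast_sub (by omega)] at hrec
    linarith

end CoverState

theorem le_of_forall_le_add_div_nat {a b c : ℝ} (h : ∀ K : ℕ, 0 < K → a ≤ b + c / K) :
    a ≤ b := by
  have hlim := (tendsto_const_nhds (x := b)).add (tendsto_const_div_atTop_nhds_zero_nat c)
  rw [add_zero] at hlim
  exact ge_of_tendsto hlim (Filter.eventually_atTop.mpr ⟨1, h⟩)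

section Density

variable {S : Finset ℤ} {s : ℕ}

theorem tauZ_mul_le_of_periodic (hS : S ⊆ Finset.Icc 0 (s : ℤ)) {T : Set ℤ} {ℓ : ℕ}
    (hper : ∀ x, x ∈ T ↔ x + (ℓ : ℤ) ∈ T) (hcov : T + (S : Set ℤ) = Set.univ) (m : ℕ) :
    tauZ S (m * ℓ) ≤ (m + s + 1) * (T ∩ Set.Ico 0 (ℓ : ℤ)).ncard := by
  classical
  set a : ℤ := -(s * ℓ)
  set T' := (Finset.Ico a (a + (m + s + 1 : ℕ) * ℓ)).filter (· ∈ T)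
  have hT' : (T' : Set ℤ) = T ∩ Set.Ico a (a + (m + s + 1 : ℕ) * ℓ) := by
    ext; simp [T']; tauto
  have hcov' : Finset.Icc (1 : ℤ) (m * ℓ : ℕ) ⊆ T' + S := by
    intro p hp
    obtain ⟨t, ht, hpt⟩ := Set.mem_add_iff_exists_sub_mem.mp (hcov.symm ▸ Set.mem_univ p)
    have hpt' := Finset.mem_Icc.mp (hS hpt)
    rw [Finset.mem_Icc] at hp
    push_cast at hp
    refine Finset.mem_add_iff_exists_sub_mem.mpr
      ⟨t, Finset.mem_filter.mpr ⟨Finset.mem_Ico.mpr ⟨?_, ?_⟩, ht⟩, hpt⟩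
    · have : (s : ℤ) ≤ s * ℓ := le_mul_of_one_le_right (by positivity) (by nlinarith)
      omega
    · push_cast
      nlinarith
  calc tauZ S (m * ℓ) ≤ T'.card := tauZ_le_card hcov'
    _ = (T ∩ Set.Ico a (a + (m + s + 1 : ℕ) * ℓ)).ncard := by rw [← hT', Set.ncard_coe_finset]
    _ = (m + s + 1) * (T ∩ Set.Ico a (a + ℓ)).ncard :=
      ncard_inter_Ico_add_nat_mul hper (by positivity) a _
    _ = (m + s + 1) * (T ∩ Set.Ico 0 (ℓ : ℤ)).ncard := by
      rw [← ncard_inter_Ico_add_mul hper 0 ℓ (-s)]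
      congr 4 <;> ring

theorem covDens_le_of_periodic (hS : S ⊆ Finset.Icc 0 (s : ℤ)) {T : Set ℤ} {ℓ : ℕ} (hℓ : 0 < ℓ)
    (hper : ∀ x, x ∈ T ↔ x + (ℓ : ℤ) ∈ T) (hcov : T + (S : Set ℤ) = Set.univ) :
    covDens S ≤ (T ∩ Set.Ico 0 (ℓ : ℤ)).ncard / ℓ := by
  set k := (T ∩ Set.Ico 0 (ℓ : ℤ)).ncard
  have hbdd : BddBelow (Set.range fun n : ℕ+ => (tauZ S n : ℝ) / n) :=
    ⟨0, by rintro _ ⟨n, rfl⟩; positivity⟩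
  refine le_of_forall_le_add_div_nat (c := (s + 1) * k / ℓ) fun m hm => ?_
  calc covDens S ≤ tauZ S (m * ℓ) / (m * ℓ : ℕ) := ciInf_le hbdd ⟨m * ℓ, by positivity⟩
    _ ≤ ((m + s + 1) * k : ℕ) / (m * ℓ : ℕ) := by
      gcongr
      exact tauZ_mul_le_of_periodic hS hper hcov m
    _ = k / ℓ + (s + 1) * k / ℓ / m := by
      push_cast
      field_simp
      ring

theorem le_covDens_of_forall_mul_sub_le (h0 : (0 : ℤ) ∈ S) {μ C : ℝ}
    (h : ∀ n : ℕ, μ * (n - C) ≤ tauZ S n) : μ ≤ covDens S := by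
  refine le_ciInf fun n => (le_div_iff₀ (by positivity)).mpr ?_
  refine le_of_forall_le_add_div_nat (c := μ * C) fun K hK => ?_
  have hKn := h (K * n)
  have hmul : (tauZ S (K * n) : ℝ) ≤ K * tauZ S n := by exact_mod_cast tauZ_mul_le h0 K n
  rw [← sub_le_iff_le_add', le_div_iff₀ (by positivity)]
  push_cast at hKn
  linarith

end Density

theorem optimal_periodic_cover_period_le (S : Finset ℤ) (s : ℕ)
    (hSsub : S ⊆ Finset.Icc (0 : ℤ) (s : ℤ)) (h0 : (0 : ℤ) ∈ S) :
    ∃ (ℓ : ℤ) (T : Set ℤ), 0 < ℓ ∧ ℓ ≤ 2 ^ s ∧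
      (∀ x : ℤ, x ∈ T ↔ x + ℓ ∈ T) ∧
      T + (S : Set ℤ) = Set.univ ∧
      ((T ∩ Set.Ico (0 : ℤ) ℓ).ncard : ℝ) / (ℓ : ℝ) = covDens S := by
  obtain ⟨ℓ, k, hℓs, ⟨hℓ, T, hper, hcov, hk⟩, hmin⟩ := exists_hasPeriodicCover_forall_div_le h0 s
  have hdens : covDens S = k / ℓ := le_antisymm
    (hk ▸ covDens_le_of_periodic hSsub hℓ hper hcov)
    (le_covDens_of_forall_mul_sub_le h0 (mul_sub_le_tauZ hSsub h0 (by positivity) hmin))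
  refine ⟨ℓ, T, by exact_mod_cast hℓ, by exact_mod_cast hℓs, hper, hcov, ?_⟩
  rw [hdens, hk, Int.cast_natCast]
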